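/- arXiv:math/0311498 — 2 statements merged into one kernel-verified Lean document; each statement's English description precedes it below -/
import Mathlib

section
/- Assume π(x) = li(x) + O(x·exp(−C·(log x)^{3/5}·(log log x)^{−1/5})) for some C > 0. Then ∑_{2 ≤ n ≤ x} 1/π(n) = (1/2)·log² x − log x − log log x + O(1) as x → ∞. -/
/-!
Write `L = log x` and `F(x) = L²/2 - L - log L`, so that `F'(x) = L/x - 1/x - 1/(xL)`.
Three integrations by parts give `li x = x/L + x/L² + 2x/L³ + O(x/L⁴)`, and the assumed error
term is `O(x/L⁴)` as well, so `π(x)` has the same expansion. Inverting it,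
`1/π(n) = F'(n) + O(1/(n log² n))`, an absolutely convergent error. The three pieces of `F'` are
antitone, so comparing their sums with integrals gives `∑_{n ≤ N} F'(n) = F(N) + O(1)`; finally
`F(x) - F(⌊x⌋) = O(1)` because `F'` is bounded.
-/

open Filter Real

noncomputable def li (x : ℝ) : ℝ := ∫ t in (2:ℝ)..x, 1 / Real.log t

noncomputable def primePi (x : ℝ) : ℝ := Nat.primeCounting ⌊x⌋₊

noncomputable def pntDelta (x : ℝ) : ℝ :=
  (Real.log x) ^ ((3:ℝ)/5) * (Real.log (Real.log x)) ^ (-(1:ℝ)/5)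

open Asymptotics MeasureTheory Set Topology

noncomputable def liExpansion (x : ℝ) : ℝ :=
  x / log x + x / log x ^ 2 + 2 * x / log x ^ 3

lemma hasDerivAt_div_log_pow (k : ℕ) {x : ℝ} (hx : 1 < x) :
    HasDerivAt (fun u => u / log u ^ k) (1 / log x ^ k - k * (1 / log x ^ (k + 1))) x := by
  have hlog : 0 < log x := log_pos hx
  have hpow : HasDerivAt (fun u => log u ^ k) (k * log x ^ (k - 1) * x⁻¹) x :=
    (hasDerivAt_log (by positivity)).pow k
  refine ((hasDerivAt_id x).div hpow (by positivity)).congr_deriv ?_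
  rcases k with _ | k
  · simp
  · simp only [id, Nat.add_sub_cancel]
    field_simp
    ring

lemma continuousOn_inv_log_pow (k : ℕ) : ContinuousOn (fun x => 1 / log x ^ k) (Ioi 1) :=
  continuousOn_const.div ((continuousOn_log.mono fun _ hx => (zero_lt_one.trans hx).ne').pow k)
    fun _ hx => pow_ne_zero k (log_pos hx).ne'

lemma intervalIntegrable_inv_log_pow (k : ℕ) {a b : ℝ} (ha : 1 < a) (hb : 1 < b) :
    IntervalIntegrable (fun x => 1 / log x ^ k) volume a b :=
  ((continuousOn_inv_log_pow k).mono fun _ hx =>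
    lt_of_lt_of_le (lt_min ha hb) hx.1).intervalIntegrable

lemma integral_inv_log_pow_eq (k : ℕ) {a b : ℝ} (ha : 1 < a) (hb : 1 < b) :
    ∫ x in a..b, 1 / log x ^ k
      = b / log b ^ k - a / log a ^ k + k * ∫ x in a..b, 1 / log x ^ (k + 1) := by
  have hint := intervalIntegrable_inv_log_pow k ha hb
  have hint' := (intervalIntegrable_inv_log_pow (k + 1) ha hb).const_mul (k : ℝ)
  have h := intervalIntegral.integral_eq_sub_of_hasDerivAt
    (fun x hx => hasDerivAt_div_log_pow k (lt_of_lt_of_le (lt_min ha hb) hx.1)) (hint.sub hint')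
  rw [intervalIntegral.integral_sub hint hint', intervalIntegral.integral_const_mul] at h
  linarith

lemma li_eq {x : ℝ} (hx : 1 < x) :
    li x = liExpansion x - liExpansion 2 + 6 * ∫ t in (2:ℝ)..x, 1 / log t ^ 4 := by
  have h2 : (1:ℝ) < 2 := one_lt_two
  have e1 := integral_inv_log_pow_eq 1 h2 hx
  have e2 := integral_inv_log_pow_eq 2 h2 hx
  have e3 := integral_inv_log_pow_eq 3 h2 hx
  simp only [li, liExpansion, pow_one] at e1 ⊢
  rw [e1, e2, e3]
  push_cast
  ring

lemma integral_inv_log_pow_le_of_le (k : ℕ) {a b : ℝ} (ha : 1 < a) (hab : a ≤ b) :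
    ∫ x in a..b, 1 / log x ^ k ≤ (b - a) / log a ^ k := by
  have hloga := log_pos ha
  calc ∫ x in a..b, 1 / log x ^ k ≤ ∫ _ in a..b, 1 / log a ^ k := by
        refine intervalIntegral.integral_mono_on hab
          (intervalIntegrable_inv_log_pow k ha (ha.trans_le hab)) intervalIntegrable_const
          fun x hx => ?_
        gcongr
        exact hx.1
    _ = (b - a) / log a ^ k := by simp [div_eq_mul_inv]

/-- Split the range of integration at `√x`. -/
lemma integral_inv_log_pow_le (k : ℕ) {x : ℝ} (hx : 4 ≤ x) :
    ∫ t in (2:ℝ)..x, 1 / log t ^ k ≤ √x / log 2 ^ k + 2 ^ k * x / log x ^ k := by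
  have h2s : 2 ≤ √x := (le_sqrt zero_le_two (by linarith)).2 (by linarith)
  have hsx : √x ≤ x := by nlinarith [sq_sqrt (show 0 ≤ x by linarith)]
  have hlog : 0 < log x := log_pos (by linarith)
  have hlog2 : 0 < log 2 := log_pos one_lt_two
  rw [← intervalIntegral.integral_add_adjacent_intervals (b := √x)
    (intervalIntegrable_inv_log_pow k one_lt_two (by linarith))
    (intervalIntegrable_inv_log_pow k (by linarith) (by linarith))]
  have h1 := integral_inv_log_pow_le_of_le k one_lt_two h2s
  have h2 := integral_inv_log_pow_le_of_le k (by linarith) hsx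
  rw [log_sqrt (by linarith), div_pow] at h2
  have e1 : (√x - 2) / log 2 ^ k ≤ √x / log 2 ^ k := by gcongr; linarith
  have e2 : (x - √x) / (log x ^ k / 2 ^ k) ≤ 2 ^ k * x / log x ^ k := by
    rw [div_div_eq_mul_div, mul_comm]
    gcongr
    linarith [sqrt_nonneg x]
  linarith

lemma eventually_sqrt_le_div_log_pow (k : ℕ) : ∀ᶠ x in atTop, √x ≤ x / log x ^ k := by
  filter_upwards [(isLittleO_log_rpow_rpow_atTop (k : ℝ) one_half_pos).bound one_pos,
    eventually_gt_atTop 1] with x hlog hx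
  have hL : 0 < log x := log_pos hx
  rw [norm_of_nonneg (by positivity), norm_of_nonneg (by positivity), one_mul, rpow_natCast,
    ← sqrt_eq_rpow] at hlog
  rw [le_div_iff₀ (by positivity)]
  calc √x * log x ^ k ≤ √x * √x := by gcongr
    _ = x := mul_self_sqrt (by linarith)

lemma one_isBigO_div_log_pow (k : ℕ) : (fun _ => (1 : ℝ)) =O[atTop] fun x => x / log x ^ k :=
  IsBigO.of_bound 1 <| by
    filter_upwards [eventually_sqrt_le_div_log_pow k, eventually_ge_atTop 1] with x hsq hx
    rw [norm_one, one_mul, norm_of_nonneg ((sqrt_nonneg x).trans hsq)]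
    exact (one_le_sqrt.2 hx).trans hsq

lemma isBigO_integral_inv_log_pow (k : ℕ) :
    (fun x => ∫ t in (2:ℝ)..x, 1 / log t ^ k) =O[atTop] fun x => x / log x ^ k := by
  refine IsBigO.of_bound (1 / log 2 ^ k + 2 ^ k) ?_
  filter_upwards [eventually_sqrt_le_div_log_pow k, eventually_ge_atTop 4] with x hsq hx
  have hlog : 0 < log x := log_pos (by linarith)
  have hlog2 : 0 < log 2 := log_pos one_lt_two
  have hnonneg : 0 ≤ ∫ t in (2:ℝ)..x, 1 / log t ^ k :=
    intervalIntegral.integral_nonneg (by linarith) fun t ht =>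
      one_div_nonneg.2 (pow_nonneg (log_nonneg (one_le_two.trans ht.1)) k)
  rw [norm_of_nonneg hnonneg, norm_of_nonneg (by positivity)]
  calc ∫ t in (2:ℝ)..x, 1 / log t ^ k ≤ √x / log 2 ^ k + 2 ^ k * x / log x ^ k :=
        integral_inv_log_pow_le k hx
    _ ≤ (1 / log 2 ^ k) * (x / log x ^ k) + 2 ^ k * (x / log x ^ k) := by
        rw [mul_div_assoc, one_div_mul_eq_div]; gcongr
    _ = _ := by ring

lemma isBigO_li_sub_liExpansion :
    (fun x => li x - liExpansion x) =O[atTop] fun x => x / log x ^ 4 := by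
  have hconst := (isBigO_const_one ℝ (liExpansion 2) atTop).trans (one_isBigO_div_log_pow 4)
  have h := hconst.neg_left.add ((isBigO_integral_inv_log_pow 4).const_mul_left 6)
  refine h.congr' ?_ EventuallyEq.rfl
  filter_upwards [eventually_gt_atTop 1] with x hx
  rw [li_eq hx]
  ring

lemma eventually_mul_log_le_rpow (k : ℕ) {C : ℝ} (hC : 0 < C) :
    ∀ᶠ u in atTop, k * log u ≤ C * (u ^ ((3:ℝ)/5) * log u ^ (-(1:ℝ)/5)) := by
  filter_upwards [(isLittleO_log_rpow_rpow_atTop (6/5) (by norm_num : (0:ℝ) < 3/5)).bound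
    (by positivity : 0 < C / (k + 1)), eventually_gt_atTop 1] with u hbound hu
  have hlog : 0 < log u := log_pos hu
  rw [norm_of_nonneg (by positivity), norm_of_nonneg (by positivity),
    show ((6:ℝ)/5) = 1 + 1/5 by norm_num, rpow_add hlog, rpow_one] at hbound
  have hfifth : 0 < log u ^ ((1:ℝ)/5) := by positivity
  rw [show (-(1:ℝ)/5) = -(1/5) by norm_num, rpow_neg hlog.le, ← mul_assoc,
    ← div_eq_mul_inv, le_div_iff₀ hfifth]
  calc k * log u * log u ^ ((1:ℝ)/5) ≤ (k + 1) * (log u * log u ^ ((1:ℝ)/5)) := by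
        rw [← mul_assoc]; gcongr; linarith
    _ ≤ (k + 1) * (C / (k + 1) * u ^ ((3:ℝ)/5)) := by gcongr
    _ = C * u ^ ((3:ℝ)/5) := by field_simp

lemma isBigO_mul_exp_neg_mul_pntDelta (k : ℕ) {C : ℝ} (hC : 0 < C) :
    (fun x => x * exp (-C * pntDelta x)) =O[atTop] fun x => x / log x ^ k := by
  refine IsBigO.of_bound 1 ?_
  filter_upwards [tendsto_log_atTop.eventually (eventually_mul_log_le_rpow k hC),
    tendsto_log_atTop.eventually_gt_atTop 0, eventually_gt_atTop 0] with x hδ hlog hx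
  have hexp : exp (-C * pntDelta x) ≤ (log x ^ k)⁻¹ := by
    rw [← exp_log (by positivity : 0 < log x ^ k), ← exp_neg, log_pow]
    exact exp_le_exp.2 (by rw [pntDelta]; linarith)
  rw [norm_of_nonneg (by positivity), norm_of_nonneg (by positivity), one_mul, div_eq_mul_inv]
  gcongr

lemma abs_inv_sub_inv_le {p m e : ℝ} (hm : 0 < m) (hpm : |p - m| ≤ e) (he : e ≤ m / 2) :
    |p⁻¹ - m⁻¹| ≤ 2 * e / m ^ 2 := by
  have hp : m / 2 ≤ p := by linarith [neg_abs_le (p - m)]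
  have hp0 : 0 < p := by linarith
  have he0 : 0 ≤ e := (abs_nonneg _).trans hpm
  rw [inv_sub_inv hp0.ne' hm.ne', abs_div, abs_sub_comm, abs_of_pos (mul_pos hp0 hm),
    div_le_div_iff₀ (by positivity) (by positivity)]
  calc |p - m| * m ^ 2 ≤ e * (2 * p * m) := by gcongr; nlinarith
    _ = 2 * e * (p * m) := by ring

noncomputable def mainTerm (x : ℝ) : ℝ := 1 / 2 * log x ^ 2 - log x - log (log x)

noncomputable def mainTermDeriv (x : ℝ) : ℝ := log x / x - x⁻¹ - (x * log x)⁻¹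

lemma abs_inv_liExpansion_sub_mainTermDeriv_le {x : ℝ} (hx : 0 < x) (hL : 2 ≤ log x) :
    |(liExpansion x)⁻¹ - mainTermDeriv x| ≤ 4 / (x * log x ^ 2) := by
  unfold liExpansion mainTermDeriv
  set L := log x
  have hL0 : 0 < L := by linarith
  have hq : 0 < L ^ 2 + L + 2 := by positivity
  have heq : (x / L + x / L ^ 2 + 2 * x / L ^ 3)⁻¹ - (L / x - x⁻¹ - (x * L)⁻¹)
      = (3 * L + 2) / (x * L * (L ^ 2 + L + 2)) := by
    field_simp
    ring
  rw [heq, abs_of_nonneg (by positivity), div_le_div_iff₀ (by positivity) (by positivity)]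
  have : 0 ≤ x * L ^ 2 * (L - 2) := mul_nonneg (by positivity) (by linarith)
  nlinarith

lemma isBigO_inv_sub_mainTermDeriv {f : ℝ → ℝ}
    (hf : (fun x => f x - liExpansion x) =O[atTop] fun x => x / log x ^ 4) :
    (fun x => (f x)⁻¹ - mainTermDeriv x) =O[atTop] fun x => (x * log x ^ 2)⁻¹ := by
  obtain ⟨c, hc0, hc⟩ := hf.exists_pos
  refine IsBigO.of_bound (2 * c + 4) ?_
  filter_upwards [hc.bound, eventually_gt_atTop 0,
    tendsto_log_atTop.eventually_ge_atTop (max 2 (2 * c))] with x hfx hx hLx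
  set L := log x
  have hL2 : 2 ≤ L := le_of_max_le_left hLx
  have hLc : 2 * c ≤ L := le_of_max_le_right hLx
  have hL0 : 0 < L := by linarith
  have hm : x / L ≤ liExpansion x := by
    simp only [liExpansion]
    have : 0 ≤ x / L ^ 2 + 2 * x / L ^ 3 := by positivity
    linarith
  rw [norm_of_nonneg (by positivity : 0 ≤ x / L ^ 4)] at hfx
  have he : c * (x / L ^ 4) ≤ liExpansion x / 2 := by
    refine le_trans ?_ (div_le_div_of_nonneg_right hm zero_le_two)
    rw [div_div, mul_div_assoc', div_le_div_iff₀ (by positivity) (by positivity)]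
    have : 2 * c ≤ L ^ 3 := hLc.trans (le_self_pow₀ (by linarith) (by norm_num))
    nlinarith [mul_le_mul_of_nonneg_left this (by positivity : 0 ≤ x * L)]
  have hinv := abs_inv_sub_inv_le ((div_pos hx hL0).trans_le hm) hfx he
  have hsq : 2 * (c * (x / L ^ 4)) / liExpansion x ^ 2 ≤ 2 * c / (x * L ^ 2) := by
    calc 2 * (c * (x / L ^ 4)) / liExpansion x ^ 2 ≤ 2 * (c * (x / L ^ 4)) / (x / L) ^ 2 := by
          gcongr
      _ = 2 * c / (x * L ^ 2) := by field_simp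
  have hmain := abs_inv_liExpansion_sub_mainTermDeriv_le hx hL2
  rw [norm_eq_abs, norm_of_nonneg (by positivity)]
  calc |(f x)⁻¹ - mainTermDeriv x|
      ≤ |(f x)⁻¹ - (liExpansion x)⁻¹| + |(liExpansion x)⁻¹ - mainTermDeriv x| :=
        abs_sub_le _ _ _
    _ ≤ 2 * c / (x * L ^ 2) + 4 / (x * L ^ 2) := by linarith
    _ = (2 * c + 4) * (x * L ^ 2)⁻¹ := by ring

lemma summable_inv_mul_log_sq : Summable fun n : ℕ => ((n : ℝ) * log n ^ 2)⁻¹ := by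
  refine (summable_condensed_iff_of_eventually_nonneg (Eventually.of_forall fun n => by
    positivity) ?_).1 ?_
  · filter_upwards [eventually_ge_atTop 2] with n hn
    have hn' : (2 : ℝ) ≤ n := by exact_mod_cast hn
    have hlog : 0 < log n := log_pos (by linarith)
    push_cast
    gcongr
    · linarith
    · linarith
  · have h := (summable_nat_pow_inv.2 one_lt_two).mul_left (log 2 ^ 2)⁻¹
    refine h.congr fun k => ?_
    push_cast
    rw [log_pow]
    rcases eq_or_ne k 0 with rfl | hk
    · simp
    · field_simp

lemma isBigO_one_sum_Icc_of_summable {u : ℕ → ℝ} (hu : Summable u) (a : ℕ) :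
    (fun N : ℕ => ∑ n ∈ Finset.Icc a N, u n) =O[atTop] fun _ => (1 : ℝ) :=
  IsBigO.of_bound (∑' n, |u n|) <| Eventually.of_forall fun N => by
    rw [norm_one, mul_one, norm_eq_abs]
    exact (Finset.abs_sum_le_sum_abs _ _).trans
      (hu.abs.sum_le_tsum _ fun n _ => abs_nonneg (u n))

lemma sum_Icc_sub_sub_mem_Icc {f g : ℝ → ℝ} {a b : ℕ} (hab : a ≤ b)
    (hf : ∀ x ∈ Icc (a : ℝ) b, HasDerivAt f (g x) x) (hg : AntitoneOn g (Icc a b)) :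
    ∑ n ∈ Finset.Icc a b, g n - (f b - f a) ∈ Icc (g b) (g a) := by
  have hab' : (a : ℝ) ≤ b := by exact_mod_cast hab
  have hg' : AntitoneOn g (uIcc (a : ℝ) b) := by rwa [uIcc_of_le hab']
  have hint : ∫ x in (a : ℝ)..b, g x = f b - f a :=
    intervalIntegral.integral_eq_sub_of_hasDerivAt (by rwa [uIcc_of_le hab'])
      hg'.intervalIntegrable
  have hupper := hg.integral_le_sum_Ico hab
  have hlower := hg.sum_le_integral_Ico hab
  rw [Finset.sum_Ico_add' (fun n : ℕ => g n), Finset.Ico_add_one_add_one_eq_Ioc] at hlower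
  have hIco := Finset.sum_Ico_add_eq_sum_Icc (f := fun n : ℕ => g n) hab
  have hIoc := Finset.add_sum_Ioc_eq_sum_Icc (f := fun n : ℕ => g n) hab
  constructor <;> linarith

lemma sum_Icc_sub_sum_Icc {g : ℕ → ℝ} {a₀ a N : ℕ} (h₀ : a₀ ≤ N + 1) (h : a ≤ N + 1) :
    ∑ n ∈ Finset.Icc a₀ N, g n - ∑ n ∈ Finset.Icc a N, g n
      = ∑ n ∈ Finset.range a, g n - ∑ n ∈ Finset.range a₀, g n := by
  rw [← Finset.Ico_add_one_right_eq_Icc, ← Finset.Ico_add_one_right_eq_Icc,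
    Finset.sum_Ico_eq_sub _ h₀, Finset.sum_Ico_eq_sub _ h]
  ring

lemma isBigO_one_sum_Icc_sub (a₀ : ℕ) {f g : ℝ → ℝ} {a : ℕ}
    (hf : ∀ x ∈ Ici (a : ℝ), HasDerivAt f (g x) x) (hg : AntitoneOn g (Ici a))
    (hg0 : ∀ x ∈ Ici (a : ℝ), 0 ≤ g x) :
    (fun N : ℕ => ∑ n ∈ Finset.Icc a₀ N, g n - f N) =O[atTop] fun _ => (1 : ℝ) := by
  have hmain : (fun N : ℕ => ∑ n ∈ Finset.Icc a N, g n - f N) =O[atTop] fun _ => (1 : ℝ) := by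
    refine IsBigO.of_bound (g a + |f a|) ?_
    filter_upwards [eventually_ge_atTop a] with N hN
    have hN' : (a : ℝ) ≤ N := by exact_mod_cast hN
    obtain ⟨hlow, hup⟩ := sum_Icc_sub_sub_mem_Icc hN (fun x hx => hf x hx.1)
      (hg.mono Icc_subset_Ici_self)
    have hgN := hg0 N hN'
    rw [norm_one, mul_one, norm_eq_abs, abs_le]
    constructor <;> linarith [neg_abs_le (f a), le_abs_self (f a)]
  refine (hmain.add (isBigO_const_one ℝ
    (∑ n ∈ Finset.range a, g n - ∑ n ∈ Finset.range a₀, g n) atTop)).congr' ?_ EventuallyEq.rfl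
  filter_upwards [eventually_ge_atTop a₀, eventually_ge_atTop a] with N h₀ h
  rw [← sum_Icc_sub_sum_Icc (g := fun n : ℕ => g n) (N := N) (by omega) (by omega)]
  ring

lemma isBigO_one_sub_comp_floor {f f' : ℝ → ℝ} (hf : ∀ᶠ x in atTop, HasDerivAt f (f' x) x)
    (hf' : f' =O[atTop] fun _ => (1 : ℝ)) :
    (fun x => f x - f ⌊x⌋₊) =O[atTop] fun _ => (1 : ℝ) := by
  obtain ⟨C, hC0, hC⟩ := hf'.exists_pos
  obtain ⟨a, ha⟩ := eventually_atTop.1 (hf.and hC.bound)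
  refine IsBigO.of_bound C ?_
  filter_upwards [eventually_ge_atTop (a + 1), eventually_ge_atTop 0] with x hx hx0
  have hNx : (⌊x⌋₊ : ℝ) ≤ x := Nat.floor_le hx0
  have hxN : x < ⌊x⌋₊ + 1 := Nat.lt_floor_add_one x
  have hseg := norm_image_sub_le_of_norm_deriv_le_segment' (a := (⌊x⌋₊ : ℝ)) (b := x) (C := C)
    (fun y hy => (ha y (by linarith [hy.1])).1.hasDerivWithinAt)
    (fun y hy => by simpa using (ha y (by linarith [hy.1])).2) x ⟨hNx, le_rfl⟩
  rw [norm_one, mul_one]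
  nlinarith

lemma hasDerivAt_half_log_sq {x : ℝ} (hx : x ≠ 0) :
    HasDerivAt (fun x => 1 / 2 * log x ^ 2) (log x / x) x := by
  refine (((hasDerivAt_log hx).pow 2).const_mul (1 / 2)).congr_deriv ?_
  norm_num
  ring

lemma hasDerivAt_log_log {x : ℝ} (hx : 1 < x) :
    HasDerivAt (fun x => log (log x)) (x * log x)⁻¹ x :=
  ((hasDerivAt_log (log_pos hx).ne').comp x (hasDerivAt_log (by positivity))).congr_deriv
    (by rw [mul_inv, mul_comm])

lemma hasDerivAt_mainTerm {x : ℝ} (hx : 1 < x) : HasDerivAt mainTerm (mainTermDeriv x) x :=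
  ((hasDerivAt_half_log_sq (by positivity)).sub (hasDerivAt_log (by positivity))).sub
    (hasDerivAt_log_log hx)

lemma antitoneOn_inv_mul_log : AntitoneOn (fun x : ℝ => (x * log x)⁻¹) (Ioi 1) :=
  fun x hx y _ hxy => show (y * log y)⁻¹ ≤ (x * log x)⁻¹ by
    have hlog : 0 < log x := log_pos hx
    have hx0 : 0 < x := zero_lt_one.trans hx
    have := log_le_log hx0 hxy
    gcongr
    linarith

lemma tendsto_mainTermDeriv : Tendsto mainTermDeriv atTop (𝓝 0) := by
  have h1 : Tendsto (fun x => log x / x) atTop (𝓝 0) :=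
    isLittleO_log_id_atTop.tendsto_div_nhds_zero
  have h3 : Tendsto (fun x => (x * log x)⁻¹) atTop (𝓝 0) :=
    tendsto_inv_atTop_zero.comp (tendsto_id.atTop_mul_atTop₀ tendsto_log_atTop)
  have h := (h1.sub tendsto_inv_atTop_zero).sub h3
  rwa [sub_zero, sub_zero] at h

lemma isBigO_one_sum_mainTermDeriv_sub_mainTerm (a₀ : ℕ) :
    (fun N : ℕ => ∑ n ∈ Finset.Icc a₀ N, mainTermDeriv n - mainTerm N)
      =O[atTop] fun _ => (1 : ℝ) := by
  have h3 : Ici ((3 : ℕ) : ℝ) ⊆ Ioi 1 := fun x hx => by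
    simp only [mem_Ici, mem_Ioi, Nat.cast_ofNat] at hx ⊢; linarith
  have hsq := isBigO_one_sum_Icc_sub a₀ (a := 3) (f := fun x => 1 / 2 * log x ^ 2)
    (fun x hx => hasDerivAt_half_log_sq (zero_lt_one.trans (h3 hx)).ne')
    (log_div_self_antitoneOn.mono fun x hx => by
      simp only [mem_Ici, Nat.cast_ofNat] at hx ⊢; linarith [exp_one_lt_d9])
    (fun x hx => div_nonneg (log_nonneg (h3 hx).le) (zero_le_one.trans (h3 hx).le))
  have hlog := isBigO_one_sum_Icc_sub a₀ (a := 3) (f := log)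
    (fun x hx => hasDerivAt_log (zero_lt_one.trans (h3 hx)).ne')
    (fun x hx y _ hxy => inv_anti₀ (zero_lt_one.trans (h3 hx)) hxy)
    (fun x hx => inv_nonneg.2 (zero_le_one.trans (h3 hx).le))
  have hloglog := isBigO_one_sum_Icc_sub a₀ (a := 3) (f := fun x => log (log x))
    (fun x hx => hasDerivAt_log_log (h3 hx)) (antitoneOn_inv_mul_log.mono h3)
    (fun x hx => inv_nonneg.2 (mul_nonneg (zero_le_one.trans (h3 hx).le)
      (log_nonneg (h3 hx).le)))
  refine ((hsq.sub hlog).sub hloglog).congr_left fun N => ?_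
  simp only [mainTermDeriv, mainTerm, Finset.sum_sub_distrib]
  ring

theorem panaitopol (C : ℝ) (hC : 0 < C)
    (hR : (fun x : ℝ => primePi x - li x)
      =O[atTop] (fun x : ℝ => x * Real.exp (-C * pntDelta x))) :
    (fun x : ℝ => (∑ n ∈ Finset.Icc 2 ⌊x⌋₊, 1 / (Nat.primeCounting n : ℝ)) -
        ((1 / 2) * (Real.log x) ^ 2 - Real.log x - Real.log (Real.log x)))
      =O[atTop] (fun _ : ℝ => (1 : ℝ)) := by
  have hπ : (fun x => primePi x - liExpansion x) =O[atTop] fun x => x / log x ^ 4 :=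
    ((hR.trans (isBigO_mul_exp_neg_mul_pntDelta 4 hC)).add isBigO_li_sub_liExpansion).congr_left
      fun x => by ring
  have hterms : Summable fun n : ℕ => 1 / (Nat.primeCounting n : ℝ) - mainTermDeriv n :=
    summable_of_isBigO_nat summable_inv_mul_log_sq <|
      ((isBigO_inv_sub_mainTermDeriv hπ).comp_tendsto tendsto_natCast_atTop_atTop).congr_left
        fun n => by simp [primePi]
  have hsum : (fun N : ℕ => ∑ n ∈ Finset.Icc 2 N, 1 / (Nat.primeCounting n : ℝ) - mainTerm N)
      =O[atTop] fun _ => (1 : ℝ) :=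
    ((isBigO_one_sum_Icc_of_summable hterms 2).add
      (isBigO_one_sum_mainTermDeriv_sub_mainTerm 2)).congr_left fun N => by
        rw [Finset.sum_sub_distrib]; ring
  have hfloor := isBigO_one_sub_comp_floor
    ((eventually_gt_atTop 1).mono fun x hx => hasDerivAt_mainTerm hx)
    (tendsto_mainTermDeriv.isBigO_one ℝ)
  exact ((hsum.comp_tendsto tendsto_nat_floor_atTop).sub hfloor).congr_left fun x => by
    simp only [Function.comp, mainTerm]; ring
end

section
/- Assume π(x) = li(x) + O(x·exp(−C·δ(x))) with δ(x) = (log x)^{3/5}·(log log x)^{−1/5}, C > 0. Then there exist constants B ∈ ℝ and D > 0 such that ∑_{2 ≤ n ≤ x} 1/π(n) = log x · log(li(x)) − ∫_3^x log(li(t))/t dt + B + O(exp(−D·δ(x))) as x → ∞. -/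
open Filter Real

/-!
Let `P(x) = log x · log li(x) - ∫₃ˣ log li(t) / t dt`; by the product rule `P' = 1 / li`.
The hypothesis gives `|1/π(n) - 1/li(n)| ≪ log² n · e^{-Cδ(n)} / n`, and since
`δ(x)⁵ ≥ log x` the factor `log⁴ n · e^{-(C/2)δ(n)}` tends to `0`, so this error is at most
`e^{-(C/2)δ(n)} / (n log² n)`, whose tail sums are `≤ e^{-(C/2)δ(N)}`. As `1/li` decreases,
`∑_{N<n≤M} 1/li(n)` differs from `∫_N^M 1/li = P(M) - P(N)` by at most
`1/li(N) ≤ e^{-δ(N)/2}`. Hence `∑_{2≤n≤N} 1/π(n) - P(N)` is Cauchy with rate `e^{-cδ(N)}`,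
`c = min(C, 1)/2`; `B` is its limit, and passing from `N = ⌊x⌋` to `x` costs another
`1/li(N)`, with `δ(⌊x⌋) ≥ δ(√x) ≥ δ(x)/2`.
-/

theorem hasDerivAt_integral_of_continuousOn_Ioi {f : ℝ → ℝ} {c a x : ℝ}
    (hf : ContinuousOn f (Set.Ioi c)) (ha : c < a) (hx : c < x) :
    HasDerivAt (fun y => ∫ t in a..y, f t) (f x) x :=
  intervalIntegral.integral_hasDerivAt_right
    ((hf.mono (Set.ordConnected_Ioi.uIcc_subset ha hx)).intervalIntegrable)
    (hf.stronglyMeasurableAtFilter isOpen_Ioi x hx) (hf.continuousAt (Ioi_mem_nhds hx))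

theorem AntitoneOn.sum_Ioc_le_integral {f : ℝ → ℝ} {a b : ℕ} (hab : a ≤ b)
    (hf : AntitoneOn f (Set.Icc a b)) :
    ∑ n ∈ Finset.Ioc a b, f n ≤ ∫ t in a..b, f t := by
  have h := hf.sum_le_integral_Ico hab
  rwa [Finset.sum_Ico_add' (fun n : ℕ => f n), Finset.Ico_add_one_add_one_eq_Ioc] at h

theorem AntitoneOn.abs_sum_Ioc_sub_integral_le {f : ℝ → ℝ} {a b : ℕ} (hab : a ≤ b)
    (hf : AntitoneOn f (Set.Icc a b)) :
    |∑ n ∈ Finset.Ioc a b, f n - ∫ t in a..b, f t| ≤ f a - f b := by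
  have h_Ico_Ioc : f b + ∑ n ∈ Finset.Ico a b, f n = f a + ∑ n ∈ Finset.Ioc a b, f n := by
    rw [← Finset.sum_cons (f := fun n : ℕ => f n) Finset.right_notMem_Ico,
      ← Finset.Icc_eq_cons_Ico hab,
      ← Finset.sum_cons (f := fun n : ℕ => f n) Finset.left_notMem_Ioc,
      ← Finset.Icc_eq_cons_Ioc hab]
  have hle := hf.integral_le_sum_Ico hab
  have hge := hf.sum_Ioc_le_integral hab
  rw [abs_le]
  constructor <;> linarith

lemma abs_inv_sub_inv_le_s12 {p l ε : ℝ} (hl : 0 < l) (hε : ε ≤ l / 2) (h : |p - l| ≤ ε) :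
    |p⁻¹ - l⁻¹| ≤ 2 * ε / l ^ 2 := by
  have hp : l / 2 ≤ p := by linarith [(abs_le.1 h).1]
  have hpl : 0 < p * l := mul_pos (by linarith) hl
  rw [inv_sub_inv (by linarith) hl.ne', abs_div, abs_sub_comm, abs_of_pos hpl,
    div_le_div_iff₀ hpl (by positivity)]
  calc |p - l| * l ^ 2 ≤ ε * l ^ 2 := by gcongr
    _ = 2 * ε * (l / 2 * l) := by ring
    _ ≤ 2 * ε * (p * l) := by
        have : 0 ≤ ε := (abs_nonneg _).trans h
        gcongr

theorem exists_eventually_dist_le_of_dist_le {α : Type*} [PseudoMetricSpace α] [CompleteSpace α]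
    {F : ℕ → α} {g : ℕ → ℝ} (hg : Tendsto g atTop (nhds 0))
    (hF : ∀ᶠ N in atTop, ∀ M, N ≤ M → dist (F M) (F N) ≤ g N) :
    ∃ B, ∀ᶠ N in atTop, dist (F N) B ≤ g N := by
  have hcauchy : CauchySeq F := Metric.cauchySeq_iff'.2 fun ε hε =>
    (hF.and (hg.eventually (gt_mem_nhds hε))).exists.imp fun _ hN M hM =>
      (hN.1 M hM).trans_lt hN.2
  obtain ⟨B, hB⟩ := cauchySeq_tendsto_of_complete hcauchy
  refine ⟨B, hF.mono fun N hN => dist_comm (F N) B ▸ ?_⟩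
  exact le_of_tendsto (hB.dist tendsto_const_nhds) (eventually_atTop.2 ⟨N, hN⟩)

lemma continuousOn_one_div_log : ContinuousOn (fun t => 1 / log t) (Set.Ioi 1) :=
  continuousOn_const.div (continuousOn_log.mono fun _ ht => (zero_lt_one.trans ht).ne')
    fun _ ht => (log_pos ht).ne'

lemma hasDerivAt_li {x : ℝ} (hx : 1 < x) : HasDerivAt li (1 / log x) x :=
  hasDerivAt_integral_of_continuousOn_Ioi continuousOn_one_div_log one_lt_two hx

lemma continuousOn_li : ContinuousOn li (Set.Ioi 1) :=
  fun _ hx => (hasDerivAt_li hx).continuousAt.continuousWithinAt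

lemma strictMonoOn_li : StrictMonoOn li (Set.Ici 2) := by
  refine strictMonoOn_of_deriv_pos (convex_Ici 2) (continuousOn_li.mono ?_) fun x hx => ?_
  · exact Set.Ici_subset_Ioi.2 one_lt_two
  · rw [interior_Ici] at hx
    rw [(hasDerivAt_li (one_lt_two.trans hx)).deriv]
    exact one_div_pos.2 (log_pos (one_lt_two.trans hx))

lemma li_pos {x : ℝ} (hx : 2 < x) : 0 < li x := by
  simpa [li] using strictMonoOn_li (Set.self_mem_Ici) hx.le hx

lemma sub_div_log_le_li {x : ℝ} (hx : 2 ≤ x) : (x - 2) / log x ≤ li x := by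
  have hlog : 0 < log x := log_pos (by linarith)
  have h := intervalIntegral.integral_mono_on (μ := MeasureTheory.volume) hx
    intervalIntegrable_const (continuousOn_one_div_log.mono ?_).intervalIntegrable
    fun t ht => one_div_le_one_div_of_le (log_pos (by linarith [ht.1]))
      (log_le_log (by linarith [ht.1]) ht.2)
  · simpa [li, div_eq_mul_inv, mul_comm] using h
  · exact Set.uIcc_of_le hx ▸ (Set.Icc_subset_Ioi_iff hx).2 one_lt_two

lemma div_two_mul_log_le_li {x : ℝ} (hx : 4 ≤ x) : x / (2 * log x) ≤ li x := by
  have hlog : 0 < log x := log_pos (by linarith)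
  refine le_trans ?_ (sub_div_log_le_li (by linarith))
  rw [div_le_div_iff₀ (by positivity) hlog]
  nlinarith

lemma continuousOn_inv_li : ContinuousOn (fun t => (li t)⁻¹) (Set.Ioi 2) :=
  (continuousOn_li.mono (Set.Ioi_subset_Ioi one_le_two)).inv₀ fun _ ht => (li_pos ht).ne'

lemma antitoneOn_inv_li : AntitoneOn (fun t => (li t)⁻¹) (Set.Ioi 2) :=
  fun _ ha _ hb hab => inv_anti₀ (li_pos ha)
    (strictMonoOn_li.monotoneOn (Set.mem_Ici.2 (le_of_lt ha)) (Set.mem_Ici.2 (le_of_lt hb)) hab)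

noncomputable def invLiPrimitive (x : ℝ) : ℝ :=
  log x * log (li x) - ∫ t in (3:ℝ)..x, log (li t) / t

lemma hasDerivAt_invLiPrimitive {x : ℝ} (hx : 2 < x) :
    HasDerivAt invLiPrimitive (li x)⁻¹ x := by
  have hcont : ContinuousOn (fun t => log (li t) / t) (Set.Ioi 2) :=
    ((continuousOn_li.mono (Set.Ioi_subset_Ioi one_le_two)).log fun _ ht => (li_pos ht).ne').div
      continuousOn_id fun _ ht => (zero_lt_two.trans ht).ne'
  have h : HasDerivAt invLiPrimitive _ x := ((hasDerivAt_log (by linarith)).mul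
    ((hasDerivAt_li (by linarith)).log (li_pos hx).ne')).sub
    (hasDerivAt_integral_of_continuousOn_Ioi hcont (a := 3) (by norm_num) hx)
  refine h.congr_deriv ?_
  have := (log_pos (by linarith : (1:ℝ) < x)).ne'
  have := (li_pos hx).ne'
  field_simp
  ring

lemma invLiPrimitive_sub {a b : ℝ} (ha : 2 < a) (hab : a ≤ b) :
    invLiPrimitive b - invLiPrimitive a = ∫ t in a..b, (li t)⁻¹ := by
  have hsub : Set.uIcc a b ⊆ Set.Ioi 2 := Set.uIcc_of_le hab ▸ (Set.Icc_subset_Ioi_iff hab).2 ha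
  exact (intervalIntegral.integral_eq_sub_of_hasDerivAt
    (fun t ht => hasDerivAt_invLiPrimitive (hsub ht))
    (continuousOn_inv_li.mono hsub).intervalIntegrable).symm

lemma invLiPrimitive_sub_mem_Icc {a b : ℝ} (ha : 2 < a) (hab : a ≤ b) (hba : b ≤ a + 1) :
    invLiPrimitive b - invLiPrimitive a ∈ Set.Icc 0 (li a)⁻¹ := by
  have hsub : Set.uIcc a b ⊆ Set.Ioi 2 := Set.uIcc_of_le hab ▸ (Set.Icc_subset_Ioi_iff hab).2 ha
  rw [invLiPrimitive_sub ha hab]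
  refine ⟨intervalIntegral.integral_nonneg hab fun t ht => (inv_pos.2 (li_pos ?_)).le, ?_⟩
  · linarith [ht.1]
  · have h := intervalIntegral.integral_mono_on (μ := MeasureTheory.volume) hab
      (continuousOn_inv_li.mono hsub).intervalIntegrable intervalIntegrable_const
      fun t ht => antitoneOn_inv_li ha (hsub (Set.uIcc_of_le hab ▸ ht)) ht.1
    rw [intervalIntegral.integral_const, smul_eq_mul] at h
    nlinarith [inv_pos.2 (li_pos ha)]

lemma sum_Ioc_inv_mul_log_sq_le {a b : ℕ} (ha : 2 ≤ a) (hab : a ≤ b) :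
    ∑ n ∈ Finset.Ioc a b, ((n : ℝ) * log n ^ 2)⁻¹ ≤ (log a)⁻¹ := by
  have ha' : (1:ℝ) < a := by exact_mod_cast ha
  have habR : (a:ℝ) ≤ b := by exact_mod_cast hab
  have hsub : Set.Icc (a:ℝ) b ⊆ Set.Ioi 1 := (Set.Icc_subset_Ioi_iff habR).2 ha'
  have hderiv : ∀ t ∈ Set.uIcc (a:ℝ) b,
      HasDerivAt (fun s => -(log s)⁻¹) ((t * log t ^ 2)⁻¹) t := by
    intro t ht
    have ht1 : 1 < t := hsub (Set.uIcc_of_le habR ▸ ht)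
    have h : HasDerivAt (fun s => (log s)⁻¹) (-t⁻¹ / log t ^ 2) t :=
      (hasDerivAt_log (by linarith)).inv (log_pos ht1).ne'
    refine h.neg.congr_deriv ?_
    rw [neg_div, neg_neg, mul_inv, div_eq_mul_inv]
  have hanti : AntitoneOn (fun t => (t * log t ^ 2)⁻¹) (Set.Icc (a:ℝ) b) := by
    intro s hs t ht hst
    have hs1 : 1 < s := hsub hs
    exact inv_anti₀ (mul_pos (by linarith) (pow_pos (log_pos hs1) 2))
      (mul_le_mul hst (pow_le_pow_left₀ (log_nonneg hs1.le) (log_le_log (by linarith) hst) 2)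
        (by positivity) (by linarith))
  have hint : IntervalIntegrable (fun t => (t * log t ^ 2)⁻¹) MeasureTheory.volume a b :=
    (hanti.mono (Set.uIcc_of_le habR).subset).intervalIntegrable
  calc ∑ n ∈ Finset.Ioc a b, ((n : ℝ) * log n ^ 2)⁻¹
      ≤ ∫ t in (a:ℝ)..b, (t * log t ^ 2)⁻¹ := hanti.sum_Ioc_le_integral hab
    _ = (log a)⁻¹ - (log b)⁻¹ := by
        rw [intervalIntegral.integral_eq_sub_of_hasDerivAt hderiv hint]; ring
    _ ≤ (log a)⁻¹ := by
        have : (1:ℝ) < b := by exact_mod_cast ha.trans hab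
        linarith [inv_pos.2 (log_pos this)]

lemma pntDelta_nonneg {x : ℝ} (hx : 1 ≤ log x) : 0 ≤ pntDelta x :=
  mul_nonneg (rpow_nonneg (by linarith) _) (rpow_nonneg (log_nonneg hx) _)

lemma pntDelta_pow_five {x : ℝ} (hx : 1 ≤ log x) :
    pntDelta x ^ 5 = log x ^ 3 / log (log x) := by
  have h1 : 0 ≤ log x := by linarith
  have h2 : 0 ≤ log (log x) := log_nonneg hx
  rw [pntDelta, mul_pow, ← rpow_natCast (log x ^ _), ← rpow_natCast (log (log x) ^ _),
    ← rpow_mul h1, ← rpow_mul h2]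
  norm_num
  rw [rpow_neg_one, ← rpow_natCast (log x) 3]
  norm_num [div_eq_mul_inv]

lemma log_le_pntDelta_pow_five {x : ℝ} (hx : 1 < log x) : log x ≤ pntDelta x ^ 5 := by
  rw [pntDelta_pow_five hx.le, le_div_iff₀ (log_pos hx)]
  have hLL := log_le_self (x := log x) (by linarith)
  nlinarith [mul_le_mul_of_nonneg_left hLL (by linarith : 0 ≤ log x)]

lemma pntDelta_le_log {x : ℝ} (hx : exp 1 ≤ log x) : pntDelta x ≤ log x := by
  have hL : 1 ≤ log x := le_trans (by linarith [add_one_le_exp 1]) hx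
  have hLL : 1 ≤ log (log x) := by simpa using log_le_log (exp_pos 1) hx
  refine le_of_pow_le_pow_left₀ (n := 5) (by norm_num) (by linarith) ?_
  rw [pntDelta_pow_five hL]
  calc log x ^ 3 / log (log x) ≤ log x ^ 3 := div_le_self (by positivity) hLL
    _ ≤ log x ^ 5 := pow_le_pow_right₀ hL (by norm_num)

lemma monotoneOn_pow_three_div_log :
    MonotoneOn (fun u : ℝ => u ^ 3 / log u) (Set.Ici (exp 1)) := by
  intro u hu v hv huv
  have hu0 : 0 < u := (exp_pos 1).trans_le hu
  have hlu : 0 < log u := log_pos ((one_lt_exp_iff.2 one_pos).trans_le hu)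
  have hlv : 0 < log v := log_pos ((one_lt_exp_iff.2 one_pos).trans_le hv)
  have key : ∀ w : ℝ, w ^ 3 / log w = w ^ 2 / (log w / w) := fun w => by
    rw [div_div_eq_mul_div]; ring
  simp only [key]
  exact div_le_div₀ (sq_nonneg v) (pow_le_pow_left₀ hu0.le huv 2)
    (div_pos hlv (hu0.trans_le huv)) (log_div_self_antitoneOn hu hv huv)

lemma pntDelta_le_pntDelta {x y : ℝ} (hx0 : 0 < x) (hx : exp 1 ≤ log x) (hxy : x ≤ y) :
    pntDelta x ≤ pntDelta y := by
  have hx1 : 1 ≤ log x := le_trans (by linarith [add_one_le_exp 1]) hx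
  have hlog : log x ≤ log y := log_le_log hx0 hxy
  refine le_of_pow_le_pow_left₀ (n := 5) (by norm_num) (pntDelta_nonneg (hx1.trans hlog)) ?_
  rw [pntDelta_pow_five hx1, pntDelta_pow_five (hx1.trans hlog)]
  exact monotoneOn_pow_three_div_log hx (hx.trans hlog) hlog

lemma tendsto_pntDelta_atTop : Tendsto pntDelta atTop atTop := by
  refine tendsto_atTop.2 fun b => ?_
  filter_upwards [tendsto_log_atTop.eventually_ge_atTop (max b 2 ^ 5)] with x hx
  have h2 : (2:ℝ) ≤ max b 2 ^ 5 :=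
    (le_max_right b 2).trans (le_self_pow₀ (by linarith [le_max_right b 2]) (by norm_num))
  have h1 : 1 < log x := by linarith
  exact (le_max_left b 2).trans (le_of_pow_le_pow_left₀ (n := 5) (by norm_num)
    (pntDelta_nonneg h1.le) (hx.trans (log_le_pntDelta_pow_five h1)))

lemma tendsto_log_pow_mul_exp_neg_mul_pntDelta (k : ℕ) {c : ℝ} (hc : 0 < c) :
    Tendsto (fun x => log x ^ k * exp (-c * pntDelta x)) atTop (nhds 0) := by
  refine squeeze_zero' ?_ ?_
    ((tendsto_rpow_mul_exp_neg_mul_atTop_nhds_zero (5 * k) c hc).comp tendsto_pntDelta_atTop)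
  · filter_upwards [tendsto_log_atTop.eventually_ge_atTop 0] with x hx
    positivity
  · filter_upwards [tendsto_log_atTop.eventually_gt_atTop 1] with x hx
    have h5 := log_le_pntDelta_pow_five hx
    have hδ := pntDelta_nonneg hx.le
    simp only [Function.comp_apply]
    rw [show (5 * k : ℝ) = ((5 * k : ℕ) : ℝ) by push_cast; ring, rpow_natCast, pow_mul]
    gcongr

lemma half_pntDelta_le_pntDelta_sqrt {x : ℝ} (hx0 : 0 < x) (hx : 2 < log x) :
    pntDelta x / 2 ≤ pntDelta (√x) := by
  have hlog : log √x = log x / 2 := log_sqrt hx0.le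
  have hL2 : 1 < log x / 2 := by linarith
  refine le_of_pow_le_pow_left₀ (n := 5) (by norm_num) (pntDelta_nonneg (hlog ▸ hL2.le)) ?_
  rw [div_pow, pntDelta_pow_five (by linarith), pntDelta_pow_five (hlog ▸ hL2.le), hlog]
  have hll : log (log x / 2) ≤ log (log x) := log_le_log (by linarith) (by linarith)
  calc log x ^ 3 / log (log x) / 2 ^ 5 = (log x / 2) ^ 3 / log (log x) / 4 := by ring
    _ ≤ (log x / 2) ^ 3 / log (log x) :=
        div_le_self (div_nonneg (by positivity) (log_nonneg (by linarith))) (by norm_num)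
    _ ≤ (log x / 2) ^ 3 / log (log x / 2) :=
        div_le_div_of_nonneg_left (by positivity) (log_pos hL2) hll

lemma eventually_half_pntDelta_le_pntDelta_floor :
    ∀ᶠ x in atTop, pntDelta x / 2 ≤ pntDelta ⌊x⌋₊ := by
  filter_upwards [tendsto_log_atTop.eventually_ge_atTop (2 * exp 1), eventually_ge_atTop 4]
    with x hlog hx
  have he : 2 < 2 * exp 1 := by linarith [add_one_le_exp 1, exp_one_gt_d9]
  have hsqrt : √x ≤ ⌊x⌋₊ := by
    have hs := sq_sqrt (show (0:ℝ) ≤ x by linarith)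
    nlinarith [sqrt_nonneg x, Nat.sub_one_lt_floor x]
  refine (half_pntDelta_le_pntDelta_sqrt (by linarith) (by linarith)).trans
    (pntDelta_le_pntDelta (sqrt_pos.2 (by linarith)) ?_ hsqrt)
  rw [log_sqrt (by linarith)]
  linarith

lemma eventually_inv_li_le_exp_neg_half_mul_pntDelta :
    ∀ᶠ x in atTop, (li x)⁻¹ ≤ exp (-(1/2) * pntDelta x) := by
  filter_upwards [(isLittleO_log_rpow_atTop (r := 1/2) (by norm_num)).bound (c := 1/2)
    (by norm_num), tendsto_log_atTop.eventually_ge_atTop (exp 1), eventually_ge_atTop 4]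
    with x hsmall hlog hx
  have hx0 : 0 < x := by linarith
  have hL : 0 < log x := log_pos (by linarith)
  rw [norm_of_nonneg hL.le, norm_of_nonneg (rpow_nonneg hx0.le _)] at hsmall
  calc (li x)⁻¹ ≤ (x / (2 * log x))⁻¹ :=
        inv_anti₀ (by positivity) (div_two_mul_log_le_li hx)
    _ = 2 * log x / x := inv_div _ _
    _ ≤ x ^ (1/2 : ℝ) / x := by gcongr; linarith
    _ = exp (log x * (-(1/2))) := by
        rw [← rpow_def_of_pos hx0, ← rpow_sub_one hx0.ne']; norm_num
    _ ≤ exp (-(1/2) * pntDelta x) := exp_le_exp.2 (by linarith [pntDelta_le_log hlog])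

lemma eventually_abs_inv_primePi_sub_inv_li_le {C : ℝ} (hC : 0 < C)
    (hR : (fun x : ℝ => primePi x - li x) =O[atTop] (fun x : ℝ => x * exp (-C * pntDelta x))) :
    ∀ᶠ x in atTop,
      |(primePi x)⁻¹ - (li x)⁻¹| ≤ exp (-(C/2) * pntDelta x) / (x * log x ^ 2) := by
  obtain ⟨K, hK, hKB⟩ := hR.exists_pos
  filter_upwards [hKB.bound, eventually_ge_atTop 4, tendsto_log_atTop.eventually_ge_atTop 1,
    (tendsto_log_pow_mul_exp_neg_mul_pntDelta 4 (half_pos hC)).eventually_le_const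
      (by positivity : 0 < (8 * K)⁻¹)] with x hbound hx hL hdecay
  set L := log x
  set E := exp (-(C/2) * pntDelta x)
  have hE : exp (-C * pntDelta x) = E ^ 2 := by rw [← exp_nat_mul]; ring_nf
  have hE1 : E ≤ 1 := exp_le_one_iff.2 (by nlinarith [pntDelta_nonneg hL])
  have hx0 : 0 < x := by linarith
  have hli := div_two_mul_log_le_li hx
  have hL0 : 0 < L := by linarith
  have hli0 : 0 < li x := li_pos (by linarith)
  rw [norm_eq_abs, hE, norm_of_nonneg (mul_nonneg hx0.le (by positivity))] at hbound
  have hKLE : 8 * K * L ^ 4 * E ≤ 1 := by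
    have h := mul_le_mul_of_nonneg_left hdecay (by positivity : (0:ℝ) ≤ 8 * K)
    rwa [mul_inv_cancel₀ (by positivity), ← mul_assoc] at h
  have hKLE2 : K * L * E ^ 2 ≤ 1 / 8 := by
    have hEE : E ^ 2 ≤ E := by nlinarith [exp_pos (-(C/2) * pntDelta x)]
    have hLL : L ≤ L ^ 4 := le_self_pow₀ hL (by norm_num)
    have h := mul_le_mul (mul_le_mul_of_nonneg_left hLL hK.le) hEE (sq_nonneg E) (by positivity)
    linarith
  have hε : K * (x * E ^ 2) ≤ li x / 2 :=
    calc K * (x * E ^ 2) = K * L * E ^ 2 * (x / L) := by field_simp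
      _ ≤ 1 / 8 * (x / L) := mul_le_mul_of_nonneg_right hKLE2 (by positivity)
      _ = x / (2 * L) / 4 := by ring
      _ ≤ li x / 2 := by linarith [div_pos hx0 (mul_pos two_pos hL0)]
  calc |(primePi x)⁻¹ - (li x)⁻¹| ≤ 2 * (K * (x * E ^ 2)) / li x ^ 2 :=
        abs_inv_sub_inv_le_s12 hli0 hε hbound
    _ ≤ 2 * (K * (x * E ^ 2)) / (x / (2 * L)) ^ 2 := by gcongr
    _ = 8 * K * L ^ 4 * E * (E / (x * L ^ 2)) := by field_simp; ring
    _ ≤ E / (x * L ^ 2) := mul_le_of_le_one_left (by positivity) hKLE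

lemma abs_sum_Ioc_inv_li_sub_integral_le {N M : ℕ} (hN : 2 < N) (hNM : N ≤ M) :
    |∑ n ∈ Finset.Ioc N M, (li n)⁻¹ - ∫ t in (N:ℝ)..M, (li t)⁻¹| ≤ (li N)⁻¹ := by
  have hN' : (2:ℝ) < N := by exact_mod_cast hN
  have hM' : (2:ℝ) < M := by exact_mod_cast hN.trans_le hNM
  have hNM' : (N:ℝ) ≤ M := by exact_mod_cast hNM
  have hanti := antitoneOn_inv_li.mono ((Set.Icc_subset_Ioi_iff hNM').2 hN')
  linarith [hanti.abs_sum_Ioc_sub_integral_le hNM, inv_pos.2 (li_pos hM')]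

lemma eventually_abs_sum_Ioc_inv_primeCounting_sub_inv_li_le {C : ℝ} (hC : 0 < C)
    (hR : (fun x : ℝ => primePi x - li x) =O[atTop] (fun x : ℝ => x * exp (-C * pntDelta x))) :
    ∀ᶠ N : ℕ in atTop, ∀ M, N ≤ M →
      |∑ n ∈ Finset.Ioc N M, (1 / (Nat.primeCounting n : ℝ) - (li n)⁻¹)|
        ≤ exp (-(C/2) * pntDelta N) := by
  have hterm : ∀ᶠ n : ℕ in atTop, |1 / (Nat.primeCounting n : ℝ) - (li n)⁻¹|
      ≤ exp (-(C/2) * pntDelta n) / (n * log n ^ 2) := by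
    filter_upwards [tendsto_natCast_atTop_atTop.eventually
      (eventually_abs_inv_primePi_sub_inv_li_le hC hR)] with n hn
    simpa [primePi, one_div] using hn
  filter_upwards [eventually_forall_ge_atTop.2 hterm, eventually_ge_atTop 2,
    tendsto_natCast_atTop_atTop.eventually (tendsto_log_atTop.eventually_ge_atTop (exp 1))]
    with N hterm hN hlog M hNM
  have hN0 : (0:ℝ) < N := by positivity
  have hlog1 : 1 ≤ log N := le_trans (by linarith [add_one_le_exp 1]) hlog
  calc |∑ n ∈ Finset.Ioc N M, (1 / (Nat.primeCounting n : ℝ) - (li n)⁻¹)|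
      ≤ ∑ n ∈ Finset.Ioc N M, |1 / (Nat.primeCounting n : ℝ) - (li n)⁻¹| :=
        Finset.abs_sum_le_sum_abs _ _
    _ ≤ ∑ n ∈ Finset.Ioc N M, exp (-(C/2) * pntDelta N) * ((n:ℝ) * log n ^ 2)⁻¹ := by
        refine Finset.sum_le_sum fun n hn => (hterm n (Finset.mem_Ioc.1 hn).1.le).trans ?_
        rw [div_eq_mul_inv]
        have hmono := pntDelta_le_pntDelta hN0 hlog (Nat.cast_le.2 (Finset.mem_Ioc.1 hn).1.le)
        exact mul_le_mul_of_nonneg_right (exp_le_exp.2 (by nlinarith)) (by positivity)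
    _ = exp (-(C/2) * pntDelta N) * ∑ n ∈ Finset.Ioc N M, ((n:ℝ) * log n ^ 2)⁻¹ :=
        (Finset.mul_sum _ _ _).symm
    _ ≤ exp (-(C/2) * pntDelta N) * (log N)⁻¹ := by
        gcongr
        exact sum_Ioc_inv_mul_log_sq_le hN hNM
    _ ≤ exp (-(C/2) * pntDelta N) :=
        mul_le_of_le_one_right (exp_pos _).le (inv_le_one_of_one_le₀ hlog1)

noncomputable def sumInvPrimeCountingRemainder (N : ℕ) : ℝ :=
  ∑ n ∈ Finset.Icc 2 N, 1 / (Nat.primeCounting n : ℝ) - invLiPrimitive N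

lemma eventually_dist_sumInvPrimeCountingRemainder_le {C : ℝ} (hC : 0 < C)
    (hR : (fun x : ℝ => primePi x - li x) =O[atTop] (fun x : ℝ => x * exp (-C * pntDelta x))) :
    ∀ᶠ N : ℕ in atTop, ∀ M, N ≤ M →
      dist (sumInvPrimeCountingRemainder M) (sumInvPrimeCountingRemainder N)
        ≤ 2 * exp (-min (C/2) (1/2) * pntDelta N) := by
  filter_upwards [eventually_abs_sum_Ioc_inv_primeCounting_sub_inv_li_le hC hR,
    eventually_gt_atTop 2,
    tendsto_natCast_atTop_atTop.eventually eventually_inv_li_le_exp_neg_half_mul_pntDelta,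
    tendsto_natCast_atTop_atTop.eventually (tendsto_log_atTop.eventually_ge_atTop 1)]
    with N hsum hN hli hlog M hNM
  have hN' : (2:ℝ) < N := by exact_mod_cast hN
  have hsplit : sumInvPrimeCountingRemainder M - sumInvPrimeCountingRemainder N
      = ∑ n ∈ Finset.Ioc N M, (1 / (Nat.primeCounting n : ℝ) - (li n)⁻¹)
        + (∑ n ∈ Finset.Ioc N M, (li n)⁻¹ - ∫ t in (N:ℝ)..M, (li t)⁻¹) := by
    have hIcc : ∀ K : ℕ, Finset.Icc 2 K = Finset.Ioc 1 K :=
      fun K => Finset.Icc_add_one_left_eq_Ioc 1 K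
    rw [sumInvPrimeCountingRemainder, sumInvPrimeCountingRemainder, hIcc, hIcc,
      ← Finset.sum_Ioc_consecutive _ (by omega : 1 ≤ N) hNM, Finset.sum_sub_distrib,
      ← invLiPrimitive_sub hN' (by exact_mod_cast hNM)]
    ring
  have hδ := pntDelta_nonneg hlog
  have hexp : ∀ c ≥ min (C/2) (1/2),
      exp (-c * pntDelta N) ≤ exp (-min (C/2) (1/2) * pntDelta N) :=
    fun c hc => exp_le_exp.2 (mul_le_mul_of_nonneg_right (neg_le_neg hc) hδ)
  rw [dist_eq, hsplit]
  calc _ ≤ _ := abs_add_le _ _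
    _ ≤ exp (-(C/2) * pntDelta N) + (li N)⁻¹ :=
        add_le_add (hsum M hNM) (abs_sum_Ioc_inv_li_sub_integral_le hN hNM)
    _ ≤ exp (-min (C/2) (1/2) * pntDelta N) + exp (-min (C/2) (1/2) * pntDelta N) :=
        add_le_add (hexp _ (min_le_left _ _)) (hli.trans (hexp _ (min_le_right _ _)))
    _ = 2 * exp (-min (C/2) (1/2) * pntDelta N) := by ring

lemma abs_sum_inv_primeCounting_sub_le {x : ℝ} (hx : 3 ≤ x) (B : ℝ) :
    |∑ n ∈ Finset.Icc 2 ⌊x⌋₊, 1 / (Nat.primeCounting n : ℝ) - (invLiPrimitive x + B)|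
      ≤ |sumInvPrimeCountingRemainder ⌊x⌋₊ - B| + (li ⌊x⌋₊)⁻¹ := by
  have hN : (2:ℝ) < ⌊x⌋₊ := by
    have : 3 ≤ ⌊x⌋₊ := Nat.le_floor (by exact_mod_cast hx)
    exact_mod_cast (by omega : 2 < ⌊x⌋₊)
  have hP := invLiPrimitive_sub_mem_Icc hN (Nat.floor_le (by linarith))
    (Nat.lt_floor_add_one x).le
  have hsplit :
      ∑ n ∈ Finset.Icc 2 ⌊x⌋₊, 1 / (Nat.primeCounting n : ℝ) - (invLiPrimitive x + B)
      = (sumInvPrimeCountingRemainder ⌊x⌋₊ - B)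
        - (invLiPrimitive x - invLiPrimitive ⌊x⌋₊) := by
    rw [sumInvPrimeCountingRemainder]; ring
  rw [hsplit]
  exact (abs_sub _ _).trans (add_le_add le_rfl ((abs_of_nonneg hP.1).trans_le hP.2))

theorem sum_formula_sharp (C : ℝ) (hC : 0 < C)
    (hR : (fun x : ℝ => primePi x - li x)
      =O[atTop] (fun x : ℝ => x * Real.exp (-C * pntDelta x))) :
    ∃ B D : ℝ, 0 < D ∧
      (fun x : ℝ => (∑ n ∈ Finset.Icc 2 ⌊x⌋₊, 1 / (Nat.primeCounting n : ℝ)) -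
          (Real.log x * Real.log (li x) -
            (∫ t in (3:ℝ)..x, Real.log (li t) / t) + B))
        =O[atTop] (fun x : ℝ => Real.exp (-D * pntDelta x)) := by
  set c := min (C/2) (1/2)
  have hc : 0 < c := lt_min (half_pos hC) one_half_pos
  have hg : Tendsto (fun N : ℕ => 2 * exp (-c * pntDelta N)) atTop (nhds 0) := by
    simpa using ((tendsto_log_pow_mul_exp_neg_mul_pntDelta 0 hc).comp
      tendsto_natCast_atTop_atTop).const_mul 2
  obtain ⟨B, hB⟩ := exists_eventually_dist_le_of_dist_le hg
    (eventually_dist_sumInvPrimeCountingRemainder_le hC hR)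
  refine ⟨B, c / 2, half_pos hc, Asymptotics.IsBigO.of_bound 3 ?_⟩
  filter_upwards [tendsto_nat_floor_atTop.eventually hB,
    tendsto_nat_floor_atTop.eventually (tendsto_natCast_atTop_atTop.eventually
      eventually_inv_li_le_exp_neg_half_mul_pntDelta),
    tendsto_nat_floor_atTop.eventually (tendsto_natCast_atTop_atTop.eventually
      (tendsto_log_atTop.eventually_ge_atTop 1)),
    eventually_half_pntDelta_le_pntDelta_floor, eventually_ge_atTop 3] with x hB hli hlog hδ hx
  have hexp : exp (-(1/2) * pntDelta ⌊x⌋₊) ≤ exp (-c * pntDelta ⌊x⌋₊) := exp_le_exp.2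
    (mul_le_mul_of_nonneg_right (neg_le_neg (min_le_right _ _)) (pntDelta_nonneg hlog))
  have hfloor : exp (-c * pntDelta ⌊x⌋₊) ≤ exp (-(c / 2) * pntDelta x) :=
    exp_le_exp.2 (by nlinarith)
  rw [norm_eq_abs, norm_of_nonneg (exp_pos _).le]
  calc _ ≤ |sumInvPrimeCountingRemainder ⌊x⌋₊ - B| + (li ⌊x⌋₊)⁻¹ :=
        abs_sum_inv_primeCounting_sub_le hx B
    _ ≤ 2 * exp (-c * pntDelta ⌊x⌋₊) + exp (-c * pntDelta ⌊x⌋₊) :=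
        add_le_add (dist_eq _ _ ▸ hB) (hli.trans hexp)
    _ ≤ 3 * exp (-(c / 2) * pntDelta x) := by linarith
end
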